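/- The group obtained from the presentation of G(Ẽ₆^{(1,1)}) by adding the quadratic relations g² = 1 for every generator t₀, t₁, s₁, …, s₆ is isomorphic to the group obtained from the presentation of G'(Ẽ₆^{(1,1)}) by adding the quadratic relations tᵢ² = 1 for all i ∈ ℤ and sⱼ² = 1 for j ∈ {1,…,6} (both present the hyperbolic elliptic Weyl group Hyp(Ẽ₆^{(1,1)})). -/

import Mathlib

/-!
STATEMENT 9: The group obtained from the presentation of G(Ẽ₆^{(1,1)}) by adding the
quadratic relations g² = 1 for every generator is isomorphic to the group obtained
from the presentation of G'(Ẽ₆^{(1,1)}) by adding the quadratic relations tᵢ² = 1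
(i ∈ ℤ) and sⱼ² = 1; both present Hyp(Ẽ₆^{(1,1)}).
-/

namespace EllipticE6Hyp

/-- Generators of `G(Ẽ₆^{(1,1)})`: `Sum.inl i` is `tᵢ` (`i ∈ {0,1}`),
`Sum.inr j` is `s_(j+1)` (so `Sum.inr 0` is `s₁`, ..., `Sum.inr 5` is `s₆`). -/
abbrev GenG : Type := Fin 2 ⊕ Fin 6

/-- Generators of `G'(Ẽ₆^{(1,1)})`: `Sum.inl i` is `tᵢ` (`i ∈ ℤ`),
`Sum.inr j` is `s_(j+1)`. -/
abbrev GenG' : Type := ℤ ⊕ Fin 6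

/-- The braid relator `(aba)⁻¹(bab)` encoding the relation `aba = bab`. -/
def br {α : Type} (a b : FreeGroup α) : FreeGroup α := (a * b * a)⁻¹ * (b * a * b)

/-- The commutation relator `(ab)⁻¹(ba)` encoding the relation `ab = ba`. -/
def cm {α : Type} (a b : FreeGroup α) : FreeGroup α := (a * b)⁻¹ * (b * a)

/-- The pairs of (0-indexed) `s`-generators joined by an edge in the diagram,
i.e. satisfying a braid relation: (s₁,s₄), (s₂,s₅), (s₃,s₆). -/
def braidPairs : List (Fin 6 × Fin 6) := [(0, 3), (1, 4), (2, 5)]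

def tG (i : Fin 2) : FreeGroup GenG := FreeGroup.of (Sum.inl i)
def sG (j : Fin 6) : FreeGroup GenG := FreeGroup.of (Sum.inr j)

/-- Relators of the elliptic Dynkin presentation of `G(Ẽ₆^{(1,1)})`:
braid relations between `t₀, t₁` and `s₁, s₂, s₃`, braid relations along the edges
of the `s`-part of the diagram, the elliptic relations for `s₁, s₂, s₃`, and
commutation relations for all remaining pairs of distinct generators except `{t₀,t₁}`. -/
def relsG : Set (FreeGroup GenG) :=
  { r | (∃ i : Fin 2, ∃ j : Fin 6, j.val < 3 ∧ r = br (tG i) (sG j)) ∨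
        (∃ p ∈ braidPairs, r = br (sG p.1) (sG p.2)) ∨
        (∃ j : Fin 6, j.val < 3 ∧
          r = (sG j * tG 1 * tG 0 * sG j * tG 1 * tG 0)⁻¹ *
              (tG 1 * tG 0 * sG j * tG 1 * tG 0 * sG j)) ∨
        (∃ i j : Fin 6, i ≠ j ∧ (i, j) ∉ braidPairs ∧ (j, i) ∉ braidPairs ∧
          r = cm (sG i) (sG j)) ∨
        (∃ i : Fin 2, ∃ j : Fin 6, 3 ≤ j.val ∧ r = cm (tG i) (sG j)) }

def tG' (i : ℤ) : FreeGroup GenG' := FreeGroup.of (Sum.inl i)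
def sG' (j : Fin 6) : FreeGroup GenG' := FreeGroup.of (Sum.inr j)

/-- Relators of the new presentation of `G'(Ẽ₆^{(1,1)})`: braid relations between
every `tᵢ` (`i ∈ ℤ`) and `s₁, s₂, s₃`, the relations `tᵢtᵢ₋₁ = tⱼtⱼ₋₁`, braid relations
along the edges of the `s`-part of the diagram, commutation relations between the
remaining pairs of distinct `s`-generators, and commutation of every `tᵢ` with
`s₄, …, s₆`. -/
def relsG' : Set (FreeGroup GenG') :=
  { r | (∃ i : ℤ, ∃ j : Fin 6, j.val < 3 ∧ r = br (tG' i) (sG' j)) ∨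
        (∃ i j : ℤ, r = (tG' i * tG' (i - 1))⁻¹ * (tG' j * tG' (j - 1))) ∨
        (∃ p ∈ braidPairs, r = br (sG' p.1) (sG' p.2)) ∨
        (∃ i j : Fin 6, i ≠ j ∧ (i, j) ∉ braidPairs ∧ (j, i) ∉ braidPairs ∧
          r = cm (sG' i) (sG' j)) ∨
        (∃ i : ℤ, ∃ j : Fin 6, 3 ≤ j.val ∧ r = cm (tG' i) (sG' j)) }

/-- Relators of the `G`-presentation together with the quadratic relators `g² = 1`
for every generator. -/
def relsHypG : Set (FreeGroup GenG) :=
  relsG ∪ { r | ∃ x : GenG, r = (FreeGroup.of x) ^ 2 }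

/-- Relators of the `G'`-presentation together with the quadratic relators `tᵢ² = 1`
for all `i ∈ ℤ` and `sⱼ² = 1` for all `j`. -/
def relsHypG' : Set (FreeGroup GenG') :=
  relsG' ∪ { r | ∃ x : GenG', r = (FreeGroup.of x) ^ 2 }

end EllipticE6Hyp

/-!
The isomorphism sends `t₀, t₁, sⱼ` to `t₀, t₁, sⱼ`; its inverse sends `tᵢ` to `(t₁t₀)ⁱt₀`.
Everything rests on one identity: for involutions `a, b, u` satisfying `aua = uau` and
`bub = ubu`, the elliptic relation `u(ba)u(ba) = (ba)u(ba)u` is equivalent to the braid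
relation between `bab` and `u`. In `G'` it turns the braid relation of `t₂ = t₁t₀t₁` with `sⱼ`
into the elliptic relation. In `G` it gives, by induction in both directions along
`t_{i+2} = t_{i+1} tᵢ t_{i+1}`, the braid relations of every `(t₁t₀)ⁱt₀` with `sⱼ`.
-/

section Reflections

variable {G : Type*} [Group G]

theorem elliptic_iff_braid {a b u : G} (ha : a * a = 1) (hb : b * b = 1)
    (hau : a * u * a = u * a * u) (hbu : b * u * b = u * b * u) :
    u * (b * a) * u * (b * a) = b * a * u * (b * a) * u ↔
      b * a * b * u * (b * a * b) = u * (b * a * b) * u := by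
  have A : ∀ x : G, a * (a * x) = x := fun x => by rw [← mul_assoc, ha, one_mul]
  have AU : ∀ x : G, u * (a * (u * x)) = a * (u * (a * x)) := fun x => by
    simpa only [mul_assoc] using congrArg (· * x) hau.symm
  have BU : ∀ x : G, u * (b * (u * x)) = b * (u * (b * x)) := fun x => by
    simpa only [mul_assoc] using congrArg (· * x) hbu.symm
  -- right multiplication by `a * u * b` turns one relation into the other
  rw [← mul_left_inj (a * u * b), eq_comm]
  simp only [mul_assoc, hb, A, AU, BU, mul_one]

theorem elliptic_inv {u c : G} (hu : u * u = 1) (h : u * c * u * c = c * u * c * u) :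
    u * c⁻¹ * u * c⁻¹ = c⁻¹ * u * c⁻¹ * u := by
  have hu' : u⁻¹ = u := inv_eq_of_mul_eq_one_right hu
  simpa only [mul_inv_rev, hu', mul_assoc] using (congrArg (·⁻¹) h).symm

section Sequence

-- `x` models the reflections `(t₁t₀)ⁱt₀` of a dihedral group, with rotation `c = t₁t₀`.
variable {x : ℤ → G} {c : G}

theorem reflection_add_two (hx : ∀ i, x i * x i = 1) (hc : ∀ i, x (i + 1) * x i = c) (i : ℤ) :
    x (i + 2) = x (i + 1) * x i * x (i + 1) := by
  rw [hc, ← hc (i + 1), add_assoc, one_add_one_eq_two, mul_assoc, hx, mul_one]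

theorem reflection_sub_one (hx : ∀ i, x i * x i = 1) (hc : ∀ i, x (i + 1) * x i = c) (i : ℤ) :
    x (i - 1) = x i * x (i + 1) * x i := by
  rw [mul_assoc, hc, ← hc (i - 1), sub_add_cancel, ← mul_assoc, hx, one_mul]

theorem reflection_mul_succ (hx : ∀ i, x i * x i = 1) (hc : ∀ i, x (i + 1) * x i = c)
    (i : ℤ) : x i * x (i + 1) = c⁻¹ := by
  rw [← hc, mul_inv_rev, inv_eq_of_mul_eq_one_right (hx i),
    inv_eq_of_mul_eq_one_right (hx (i + 1))]

theorem braid_reflection_of_elliptic (hx : ∀ i, x i * x i = 1)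
    (hc : ∀ i, x (i + 1) * x i = c) {u : G} (hu : u * u = 1)
    (h0 : x 0 * u * x 0 = u * x 0 * u) (h1 : x 1 * u * x 1 = u * x 1 * u)
    (hE : u * c * u * c = c * u * c * u) (i : ℤ) :
    x i * u * x i = u * x i * u := by
  suffices ∀ i : ℤ, (x i * u * x i = u * x i * u) ∧
      (x (i + 1) * u * x (i + 1) = u * x (i + 1) * u) from (this i).1
  intro i
  induction i using Int.induction_on with
  | zero => exact ⟨h0, by rwa [zero_add]⟩
  | succ k ih =>
    refine ⟨ih.2, ?_⟩
    have hE' : u * (x (k + 1) * x k) * u * (x (k + 1) * x k) =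
        x (k + 1) * x k * u * (x (k + 1) * x k) * u := by rwa [hc]
    rw [add_assoc, one_add_one_eq_two, reflection_add_two hx hc]
    exact (elliptic_iff_braid (hx k) (hx (k + 1)) ih.1 ih.2).1 hE'
  | pred k ih =>
    refine ⟨?_, by rw [sub_add_cancel]; exact ih.1⟩
    have hE' : u * (x (-k) * x (-k + 1)) * u * (x (-k) * x (-k + 1)) =
        x (-k) * x (-k + 1) * u * (x (-k) * x (-k + 1)) * u := by
      rw [reflection_mul_succ hx hc]; exact elliptic_inv hu hE
    rw [reflection_sub_one hx hc]
    exact (elliptic_iff_braid (hx (-k + 1)) (hx (-k)) ih.2 ih.1).1 hE'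

end Sequence

def dihedralSeq (t₀ t₁ : G) (i : ℤ) : G := (t₁ * t₀) ^ i * t₀

section Dihedral

variable {t₀ t₁ : G}

theorem dihedralSeq_zero : dihedralSeq t₀ t₁ 0 = t₀ := by
  rw [dihedralSeq, zpow_zero, one_mul]

theorem dihedralSeq_one (h₀ : t₀ * t₀ = 1) : dihedralSeq t₀ t₁ 1 = t₁ := by
  rw [dihedralSeq, zpow_one, mul_assoc, h₀, mul_one]

theorem conj_zpow_of_mul_self (h₀ : t₀ * t₀ = 1) (h₁ : t₁ * t₁ = 1) (i : ℤ) :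
    t₀ * (t₁ * t₀) ^ i * t₀ = (t₁ * t₀) ^ (-i) := by
  have e₀ : t₀⁻¹ = t₀ := inv_eq_of_mul_eq_one_right h₀
  have e₁ : t₁⁻¹ = t₁ := inv_eq_of_mul_eq_one_right h₁
  calc t₀ * (t₁ * t₀) ^ i * t₀ = (t₀ * (t₁ * t₀) * t₀⁻¹) ^ i := by
        rw [conj_zpow, e₀]
    _ = (t₁ * t₀) ^ (-i) := by
      rw [e₀, ← mul_assoc, mul_assoc _ t₀, h₀, mul_one, zpow_neg, ← inv_zpow, mul_inv_rev,
        e₀, e₁]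

theorem dihedralSeq_mul_self (h₀ : t₀ * t₀ = 1) (h₁ : t₁ * t₁ = 1) (i : ℤ) :
    dihedralSeq t₀ t₁ i * dihedralSeq t₀ t₁ i = 1 := by
  rw [dihedralSeq, mul_assoc, ← mul_assoc t₀, conj_zpow_of_mul_self h₀ h₁,
    zpow_neg, mul_inv_cancel]

theorem dihedralSeq_succ_mul (h₀ : t₀ * t₀ = 1) (h₁ : t₁ * t₁ = 1) (i : ℤ) :
    dihedralSeq t₀ t₁ (i + 1) * dihedralSeq t₀ t₁ i = t₁ * t₀ := by
  rw [dihedralSeq, dihedralSeq, mul_assoc, ← mul_assoc t₀, conj_zpow_of_mul_self h₀ h₁,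
    ← zpow_add, add_neg_cancel_comm, zpow_one]

theorem dihedralSeq_mul_sub_one (h₀ : t₀ * t₀ = 1) (h₁ : t₁ * t₁ = 1) (i : ℤ) :
    dihedralSeq t₀ t₁ i * dihedralSeq t₀ t₁ (i - 1) = t₁ * t₀ := by
  simpa using dihedralSeq_succ_mul h₀ h₁ (i - 1)

theorem Commute.dihedralSeq_left {u : G} (h₀ : Commute t₀ u) (h₁ : Commute t₁ u) (i : ℤ) :
    Commute (dihedralSeq t₀ t₁ i) u :=
  ((h₁.mul_left h₀).zpow_left i).mul_left h₀

theorem map_dihedralSeq {H : Type*} [Group H] (f : G →* H) (i : ℤ) :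
    f (dihedralSeq t₀ t₁ i) = dihedralSeq (f t₀) (f t₁) i := by
  rw [dihedralSeq, dihedralSeq, map_mul, map_zpow, map_mul]

end Dihedral

theorem eq_dihedralSeq_of_reflection {x : ℤ → G} (hx : ∀ i, x i * x i = 1)
    (hc : ∀ i, x (i + 1) * x i = x 1 * x 0) (i : ℤ) : x i = dihedralSeq (x 0) (x 1) i := by
  have hsucc : ∀ i, x (i + 1) = x 1 * x 0 * x i := fun i => by
    rw [← hc, mul_assoc, hx, mul_one]
  induction i using Int.induction_on with
  | zero => rw [dihedralSeq_zero]
  | succ k ih =>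
    rw [hsucc, ih, dihedralSeq, dihedralSeq, ← mul_assoc, ← zpow_one_add, add_comm]
  | pred k ih =>
    rw [← inv_mul_cancel_left (x 1 * x 0) (x _), ← hsucc, sub_add_cancel, ih, dihedralSeq,
      dihedralSeq, ← mul_assoc, ← zpow_neg_one, ← zpow_add, neg_add_eq_sub]

end Reflections

namespace EllipticE6Hyp

abbrev Hyp : Type := PresentedGroup relsHypG
abbrev Hyp' : Type := PresentedGroup relsHypG'

namespace Hyp

def t (i : Fin 2) : Hyp := PresentedGroup.of (Sum.inl i)
def s (j : Fin 6) : Hyp := PresentedGroup.of (Sum.inr j)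

theorem of_mul_self (x : GenG) : (PresentedGroup.of x : Hyp) * PresentedGroup.of x = 1 := by
  rw [← sq]; exact PresentedGroup.one_of_mem (Or.inr ⟨x, rfl⟩)

theorem t_mul_self (i : Fin 2) : t i * t i = 1 := of_mul_self _
theorem s_mul_self (j : Fin 6) : s j * s j = 1 := of_mul_self _

theorem t_braid_s (i : Fin 2) {j : Fin 6} (hj : j.val < 3) : t i * s j * t i = s j * t i * s j :=
  PresentedGroup.mk_eq_mk_of_inv_mul_mem (Or.inl (Or.inl ⟨i, j, hj, rfl⟩))

theorem s_braid_s {p : Fin 6 × Fin 6} (hp : p ∈ braidPairs) :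
    s p.1 * s p.2 * s p.1 = s p.2 * s p.1 * s p.2 :=
  PresentedGroup.mk_eq_mk_of_inv_mul_mem (Or.inl (Or.inr (Or.inl ⟨p, hp, rfl⟩)))

theorem elliptic {j : Fin 6} (hj : j.val < 3) :
    s j * (t 1 * t 0) * s j * (t 1 * t 0) = t 1 * t 0 * s j * (t 1 * t 0) * s j := by
  have h : s j * t 1 * t 0 * s j * t 1 * t 0 = t 1 * t 0 * s j * t 1 * t 0 * s j :=
    PresentedGroup.mk_eq_mk_of_inv_mul_mem (Or.inl (Or.inr (Or.inr (Or.inl ⟨j, hj, rfl⟩))))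
  simpa only [mul_assoc] using h

theorem s_comm_s {i j : Fin 6} (hij : i ≠ j) (h₁ : (i, j) ∉ braidPairs)
    (h₂ : (j, i) ∉ braidPairs) : s i * s j = s j * s i :=
  PresentedGroup.mk_eq_mk_of_inv_mul_mem
    (Or.inl (Or.inr (Or.inr (Or.inr (Or.inl ⟨i, j, hij, h₁, h₂, rfl⟩)))))

theorem t_comm_s (i : Fin 2) {j : Fin 6} (hj : 3 ≤ j.val) : Commute (t i) (s j) :=
  PresentedGroup.mk_eq_mk_of_inv_mul_mem
    (Or.inl (Or.inr (Or.inr (Or.inr (Or.inr ⟨i, j, hj, rfl⟩)))))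

theorem dihedralSeq_braid_s (i : ℤ) {j : Fin 6} (hj : j.val < 3) :
    dihedralSeq (t 0) (t 1) i * s j * dihedralSeq (t 0) (t 1) i =
      s j * dihedralSeq (t 0) (t 1) i * s j :=
  braid_reflection_of_elliptic (dihedralSeq_mul_self (t_mul_self 0) (t_mul_self 1))
    (dihedralSeq_succ_mul (t_mul_self 0) (t_mul_self 1)) (s_mul_self j)
    (by rw [dihedralSeq_zero]; exact t_braid_s 0 hj)
    (by rw [dihedralSeq_one (t_mul_self 0)]; exact t_braid_s 1 hj) (elliptic hj) i

end Hyp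

namespace Hyp'

def t (i : ℤ) : Hyp' := PresentedGroup.of (Sum.inl i)
def s (j : Fin 6) : Hyp' := PresentedGroup.of (Sum.inr j)

theorem of_mul_self (x : GenG') : (PresentedGroup.of x : Hyp') * PresentedGroup.of x = 1 := by
  rw [← sq]; exact PresentedGroup.one_of_mem (Or.inr ⟨x, rfl⟩)

theorem t_mul_self (i : ℤ) : t i * t i = 1 := of_mul_self _
theorem s_mul_self (j : Fin 6) : s j * s j = 1 := of_mul_self _

theorem t_braid_s (i : ℤ) {j : Fin 6} (hj : j.val < 3) : t i * s j * t i = s j * t i * s j :=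
  PresentedGroup.mk_eq_mk_of_inv_mul_mem (Or.inl (Or.inl ⟨i, j, hj, rfl⟩))

theorem t_mul_t_sub_one (i j : ℤ) : t i * t (i - 1) = t j * t (j - 1) :=
  PresentedGroup.mk_eq_mk_of_inv_mul_mem (Or.inl (Or.inr (Or.inl ⟨i, j, rfl⟩)))

theorem s_braid_s {p : Fin 6 × Fin 6} (hp : p ∈ braidPairs) :
    s p.1 * s p.2 * s p.1 = s p.2 * s p.1 * s p.2 :=
  PresentedGroup.mk_eq_mk_of_inv_mul_mem (Or.inl (Or.inr (Or.inr (Or.inl ⟨p, hp, rfl⟩))))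

theorem s_comm_s {i j : Fin 6} (hij : i ≠ j) (h₁ : (i, j) ∉ braidPairs)
    (h₂ : (j, i) ∉ braidPairs) : s i * s j = s j * s i :=
  PresentedGroup.mk_eq_mk_of_inv_mul_mem
    (Or.inl (Or.inr (Or.inr (Or.inr (Or.inl ⟨i, j, hij, h₁, h₂, rfl⟩)))))

theorem t_comm_s (i : ℤ) {j : Fin 6} (hj : 3 ≤ j.val) : Commute (t i) (s j) :=
  PresentedGroup.mk_eq_mk_of_inv_mul_mem
    (Or.inl (Or.inr (Or.inr (Or.inr (Or.inr ⟨i, j, hj, rfl⟩)))))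

theorem t_succ_mul_t (i : ℤ) : t (i + 1) * t i = t 1 * t 0 := by
  simpa using t_mul_t_sub_one (i + 1) 1

theorem t_eq_dihedralSeq (i : ℤ) : t i = dihedralSeq (t 0) (t 1) i :=
  eq_dihedralSeq_of_reflection t_mul_self t_succ_mul_t i

theorem elliptic {j : Fin 6} (hj : j.val < 3) :
    s j * (t 1 * t 0) * s j * (t 1 * t 0) = t 1 * t 0 * s j * (t 1 * t 0) * s j := by
  have h₂ : t 2 = t 1 * t 0 * t 1 := by simpa using reflection_add_two t_mul_self t_succ_mul_t 0
  refine (elliptic_iff_braid (t_mul_self 0) (t_mul_self 1) (t_braid_s 0 hj) (t_braid_s 1 hj)).2 ?_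
  rw [← h₂]
  exact t_braid_s 2 hj

end Hyp'

theorem lift_relsHypG : ∀ r ∈ relsHypG,
    FreeGroup.lift (Sum.elim (fun i : Fin 2 => Hyp'.t (i : ℕ)) Hyp'.s) r = 1 := by
  rintro r ((⟨i, j, hj, rfl⟩ | ⟨p, hp, rfl⟩ | ⟨j, hj, rfl⟩ |
    ⟨i, j, hij, h₁, h₂, rfl⟩ | ⟨i, j, hj, rfl⟩) | ⟨x | j, rfl⟩)
  all_goals simp only [br, cm, tG, sG, map_mul, map_inv, FreeGroup.lift_apply_of,
    Sum.elim_inl, Sum.elim_inr, inv_mul_eq_one, sq]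
  · exact Hyp'.t_braid_s i hj
  · exact Hyp'.s_braid_s hp
  · simpa only [Fin.val_zero, Fin.val_one, Nat.cast_zero, Nat.cast_one, mul_assoc] using
      Hyp'.elliptic hj
  · exact Hyp'.s_comm_s hij h₁ h₂
  · exact Hyp'.t_comm_s i hj
  · exact Hyp'.t_mul_self x
  · exact Hyp'.s_mul_self j

theorem lift_relsHypG' : ∀ r ∈ relsHypG',
    FreeGroup.lift (Sum.elim (dihedralSeq (Hyp.t 0) (Hyp.t 1)) Hyp.s) r = 1 := by
  have h₀ := Hyp.t_mul_self 0
  have h₁ := Hyp.t_mul_self 1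
  rintro r ((⟨i, j, hj, rfl⟩ | ⟨i, j, rfl⟩ | ⟨p, hp, rfl⟩ |
    ⟨i, j, hij, hij₁, hij₂, rfl⟩ | ⟨i, j, hj, rfl⟩) | ⟨i | j, rfl⟩)
  all_goals simp only [br, cm, tG', sG', map_mul, map_inv, FreeGroup.lift_apply_of,
    Sum.elim_inl, Sum.elim_inr, inv_mul_eq_one, sq]
  · exact Hyp.dihedralSeq_braid_s i hj
  · rw [dihedralSeq_mul_sub_one h₀ h₁, dihedralSeq_mul_sub_one h₀ h₁]
  · exact Hyp.s_braid_s hp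
  · exact Hyp.s_comm_s hij hij₁ hij₂
  · exact ((Hyp.t_comm_s 0 hj).dihedralSeq_left (Hyp.t_comm_s 1 hj) i).eq
  · exact dihedralSeq_mul_self h₀ h₁ i
  · exact Hyp.s_mul_self j

def toHyp' : Hyp →* Hyp' := PresentedGroup.toGroup lift_relsHypG
def ofHyp' : Hyp' →* Hyp := PresentedGroup.toGroup lift_relsHypG'

theorem toHyp'_t (i : Fin 2) : toHyp' (Hyp.t i) = Hyp'.t (i : ℕ) := PresentedGroup.toGroup.of _
theorem ofHyp'_t (i : ℤ) : ofHyp' (Hyp'.t i) = dihedralSeq (Hyp.t 0) (Hyp.t 1) i :=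
  PresentedGroup.toGroup.of _

theorem ofHyp'_comp_toHyp' : ofHyp'.comp toHyp' = MonoidHom.id Hyp := by
  ext (i | j)
  · change ofHyp' (toHyp' (Hyp.t i)) = Hyp.t i
    rw [toHyp'_t, ofHyp'_t]
    fin_cases i
    exacts [dihedralSeq_zero, dihedralSeq_one (Hyp.t_mul_self 0)]
  · rfl

theorem toHyp'_comp_ofHyp' : toHyp'.comp ofHyp' = MonoidHom.id Hyp' := by
  ext (i | j)
  · change toHyp' (ofHyp' (Hyp'.t i)) = Hyp'.t i
    rw [ofHyp'_t, map_dihedralSeq, toHyp'_t, toHyp'_t, Hyp'.t_eq_dihedralSeq i]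
    rfl
  · rfl

theorem Hyp_iso : Nonempty (PresentedGroup relsHypG ≃* PresentedGroup relsHypG') :=
  ⟨MonoidHom.toMulEquiv toHyp' ofHyp' ofHyp'_comp_toHyp' toHyp'_comp_ofHyp'⟩

end EllipticE6Hyp
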